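/- arXiv:2312.08005 — 9 statements merged into one kernel-verified Lean document; each statement's English description precedes it below -/
import Mathlib

section
/- Let G be a profinite group such that for every open subgroup U of G the abelianization U^{ab} (quotient of U by the closure of its commutator subgroup) is torsion-free. Then G is torsion-free. -/
open scoped commutatorElement

/-- A profinite group all of whose open subgroups have torsion-free
(topological) abelianization is itself torsion-free.  Torsion-freeness of the
abelianization `U / closure [U,U]` is expressed by: whenever a power `u ^ n`
(`n > 0`) of `u : U` lies in the closure of the commutator subgroup, so does `u`. -/
theorem profinite_torsionFree_of_open_abelianization_torsionFree
    (G : Type*) [Group G] [TopologicalSpace G] [IsTopologicalGroup G]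
    [CompactSpace G] [T2Space G] [TotallyDisconnectedSpace G]
    (h : ∀ U : Subgroup G, IsOpen (U : Set G) →
      ∀ u : U, ∀ n : ℕ, 0 < n →
        u ^ n ∈ (commutator U).topologicalClosure → u ∈ (commutator U).topologicalClosure) :
    ∀ g : G, ∀ n : ℕ, 0 < n → g ^ n = 1 → g = 1 := by
  intro g n hn hgn
  by_contra hg
  -- find a clopen neighborhood of 1 avoiding g
  obtain ⟨W, hWclopen, h1W, hWsub⟩ :=
    compact_exists_isClopen_in_isOpen (isOpen_compl_singleton (x := g)) (by simpa using Ne.symm hg)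
  -- find an open normal subgroup N ⊆ W
  obtain ⟨N, hNW⟩ :=
    IsTopologicalGroup.exist_openNormalSubgroup_sub_clopen_nhds_of_one hWclopen h1W
  have hgN : g ∉ N.toSubgroup := fun hgmem => hWsub (hNW hgmem) rfl
  -- the open subgroup U generated by N and g
  set U : Subgroup G := N.toSubgroup ⊔ Subgroup.zpowers g with hU
  have hUopen : IsOpen (U : Set G) :=
    Subgroup.isOpen_mono (H₁ := N.toSubgroup) le_sup_left N.isOpen
  have hgU : g ∈ U := Subgroup.mem_sup_right (Subgroup.mem_zpowers g)
  -- commutators of elements of U lie in N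
  have hcomm : ∀ x ∈ U, ∀ y ∈ U, ⁅x, y⁆ ∈ N.toSubgroup := by
    have hN : N.toSubgroup.Normal := N.isNormal'
    intro x hx y hy
    rw [← QuotientGroup.eq_one_iff]
    set π := QuotientGroup.mk' N.toSubgroup
    have key : ∀ z ∈ U, π z ∈ Subgroup.zpowers (π g) := by
      intro z hz
      have : π z ∈ Subgroup.map π U := Subgroup.mem_map_of_mem π hz
      rw [hU, Subgroup.map_sup] at this
      have hmapN : Subgroup.map π N.toSubgroup = ⊥ := by
        rw [eq_bot_iff]
        rintro _ ⟨a, ha, rfl⟩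
        simp only [Subgroup.mem_bot]
        exact (QuotientGroup.eq_one_iff a).mpr ha
      rw [hmapN, bot_sup_eq, MonoidHom.map_zpowers] at this
      exact this
    obtain ⟨k, hk⟩ := key x hx
    obtain ⟨l, hl⟩ := key y hy
    show π ⁅x, y⁆ = 1
    rw [map_commutatorElement, ← hk, ← hl, commutatorElement_eq_one_iff_commute]
    exact (Commute.refl (π g)).zpow_zpow k l
  -- hence the closed commutator subgroup of U is contained in N
  have hN_closed : IsClosed (N.toSubgroup : Set G) :=
    OpenSubgroup.isClosed ⟨N.toSubgroup, N.isOpen⟩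
  have hle : (commutator U).topologicalClosure ≤ N.toSubgroup.subgroupOf U := by
    apply Subgroup.topologicalClosure_minimal
    · rw [commutator_def, Subgroup.commutator_le]
      intro a _ b _
      have : ((⁅a, b⁆ : U) : G) = ⁅(a : G), (b : G)⁆ := map_commutatorElement U.subtype a b
      rw [Subgroup.mem_subgroupOf, this]
      exact hcomm a a.2 b b.2
    · exact IsClosed.preimage continuous_subtype_val hN_closed
  -- apply the torsion-freeness hypothesis to u = g in U
  have hu : (⟨g, hgU⟩ : U) ^ n ∈ (commutator U).topologicalClosure := by
    have : (⟨g, hgU⟩ : U) ^ n = 1 := by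
      ext
      simpa using hgn
    rw [this]
    exact Subgroup.one_mem _
  have := hle (h U hUopen ⟨g, hgU⟩ n hn hu)
  rw [Subgroup.mem_subgroupOf] at this
  exact hgN this
end

section
/- Let G be a profinite group, H a closed subgroup of G, and V an open subgroup of G such that the closed commutator subgroup [H,H] is contained in V. Then there exists an open subgroup U of G with H ⊆ U and [U,U] ⊆ V. -/
open scoped commutatorElement

/-- If `G` is a profinite group, `H` a closed subgroup and `V` an open
subgroup containing the closed commutator subgroup `[H,H]` (topological closure of the
commutator subgroup of `H`), then there is an open subgroup `U` with `H ≤ U` and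
closure `[U,U] ⊆ V`. -/
theorem exists_open_subgroup_commutator_le
    (G : Type*) [Group G] [TopologicalSpace G] [IsTopologicalGroup G]
    [CompactSpace G] [T2Space G] [TotallyDisconnectedSpace G]
    (H : Subgroup G) (hH : IsClosed (H : Set G))
    (V : Subgroup G) (hV : IsOpen (V : Set G))
    (hHV : (⁅H, H⁆ : Subgroup G).topologicalClosure ≤ V) :
    ∃ U : Subgroup G, IsOpen (U : Set G) ∧ H ≤ U ∧
      (⁅U, U⁆ : Subgroup G).topologicalClosure ≤ V := by
  -- V has finite index, so its normal core N is an open normal subgroup contained in V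
  have : Finite (G ⧸ V) := Subgroup.quotient_finite_of_isOpen V hV
  have hVfi : V.FiniteIndex := Subgroup.finiteIndex_of_finite_quotient
  set N := V.normalCore with hN
  have hNnormal : N.Normal := V.normalCore_normal
  have hNV : N ≤ V := V.normalCore_le
  have hNclosed : IsClosed (N : Set G) :=
    V.normalCore_isClosed (Subgroup.isClosed_of_isOpen V hV)
  have hNfi : N.FiniteIndex := V.finiteIndex_normalCore
  have hNopen : IsOpen (N : Set G) := Subgroup.isOpen_of_isClosed_of_finiteIndex N hNclosed
  refine ⟨H ⊔ N, Subgroup.isOpen_mono le_sup_right hNopen, le_sup_left, ?_⟩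
  have hVclosed : IsClosed (V : Set G) := Subgroup.isClosed_of_isOpen V hV
  have hcomm : ⁅H ⊔ N, H ⊔ N⁆ ≤ V := by
    rw [Subgroup.commutator_le]
    intro g hg h hh
    replace hg : g ∈ (↑(H ⊔ N) : Set G) := hg
    replace hh : h ∈ (↑(H ⊔ N) : Set G) := hh
    rw [Subgroup.mul_normal H N] at hg hh
    obtain ⟨a, ha, n, hn, rfl⟩ := hg
    obtain ⟨b, hb, m, hm, rfl⟩ := hh
    have hab : ⁅a, b⁆ ∈ V :=
      hHV (Subgroup.le_topologicalClosure _
        (Subgroup.commutator_mem_commutator ha hb))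
    -- [an, bm] differs from [a,b] by an element of N
    have key : (⁅a, b⁆)⁻¹ * ⁅a * n, b * m⁆ ∈ N := by
      have : (QuotientGroup.mk' N) ((⁅a, b⁆)⁻¹ * ⁅a * n, b * m⁆) = 1 := by
        have hn' : (QuotientGroup.mk' N) n = 1 := (QuotientGroup.eq_one_iff n).mpr hn
        have hm' : (QuotientGroup.mk' N) m = 1 := (QuotientGroup.eq_one_iff m).mpr hm
        simp only [map_mul, map_inv, map_commutatorElement, hn', hm', mul_one]
        group
      exact (QuotientGroup.eq_one_iff _).mp (by simpa using this)
    have : ⁅a * n, b * m⁆ = ⁅a, b⁆ * ((⁅a, b⁆)⁻¹ * ⁅a * n, b * m⁆) := by group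
    rw [this]
    exact V.mul_mem hab (hNV key)
  have := Subgroup.topologicalClosure_minimal (⁅H ⊔ N, H ⊔ N⁆) hcomm hVclosed
  exact this
end

section
/- Let G be a profinite group and H a closed subgroup of G. Define the derived series by K^{[0]} = K and K^{[i+1]} = [K^{[i]}, K^{[i]}] (topological closures). Then for every i ≥ 1, the intersection of U^{[i]} over all open subgroups U of G containing H equals H^{[i]}. -/
/-- The closed derived series of a subgroup `K` of a topological group `G`:
`K^{[0]} = K` and `K^{[i+1]}` is the topological closure of `[K^{[i]}, K^{[i]}]`. -/
def closedDerivedSeries (G : Type*) [Group G] [TopologicalSpace G] [IsTopologicalGroup G]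
    (K : Subgroup G) : ℕ → Subgroup G
  | 0 => K
  | (i + 1) =>
      (⁅closedDerivedSeries G K i, closedDerivedSeries G K i⁆ : Subgroup G).topologicalClosure

section Aux
open Pointwise
open scoped commutatorElement

variable {G : Type*} [Group G] [TopologicalSpace G] [IsTopologicalGroup G]

lemma closedDerivedSeries_mono {K L : Subgroup G} (h : K ≤ L) :
    ∀ i, closedDerivedSeries G K i ≤ closedDerivedSeries G L i
  | 0 => h
  | (i + 1) => by
      refine Subgroup.topologicalClosure_minimal _ ?_
        (Subgroup.isClosed_topologicalClosure _)
      refine le_trans (Subgroup.commutator_mono (closedDerivedSeries_mono h i)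
        (closedDerivedSeries_mono h i)) ?_
      exact Subgroup.le_topologicalClosure _

lemma closedDerivedSeries_isClosed {K : Subgroup G} (hK : IsClosed (K : Set G)) :
    ∀ i, IsClosed ((closedDerivedSeries G K i : Set G))
  | 0 => hK
  | (i + 1) => Subgroup.isClosed_topologicalClosure _

variable [CompactSpace G] [T2Space G] [TotallyDisconnectedSpace G]

/-- In a profinite group, between a closed subgroup and an open superset there is an
open subgroup. -/
lemma exists_open_subgroup_between {K : Subgroup G} (hK : IsClosed (K : Set G))
    {W : Set G} (hW : IsOpen W) (hKW : (K : Set G) ⊆ W) :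
    ∃ U : Subgroup G, K ≤ U ∧ IsOpen (U : Set G) ∧ (U : Set G) ⊆ W := by
  have hKc : IsCompact (K : Set G) := hK.isCompact
  obtain ⟨V, hV, hKV⟩ := compact_open_separated_mul_right hKc hW hKW
  obtain ⟨C, ⟨hC1, hCclopen⟩, hCV⟩ := (nhds_basis_clopen (1 : G)).mem_iff.mp hV
  obtain ⟨N, hN⟩ :=
    IsTopologicalGroup.exist_openNormalSubgroup_sub_clopen_nhds_of_one hCclopen hC1
  refine ⟨K ⊔ N.toSubgroup, le_sup_left, ?_, ?_⟩
  · exact Subgroup.isOpen_mono le_sup_right N.isOpen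
  · rw [Subgroup.mul_normal K N.toSubgroup]
    calc (K : Set G) * N ⊆ (K : Set G) * V :=
          Set.mul_subset_mul_left (hN.trans hCV)
      _ ⊆ W := hKV

/-- A closed subgroup of a profinite group is the intersection of the open subgroups
containing it. -/
lemma closed_subgroup_eq_iInf {K : Subgroup G} (hK : IsClosed (K : Set G)) :
    K = ⨅ V ∈ {V : Subgroup G | K ≤ V ∧ IsOpen (V : Set G)}, V := by
  refine le_antisymm (le_iInf₂ fun V hV => hV.1) fun x hx => ?_
  by_contra hxK
  have hsub : (K : Set G) ⊆ {x}ᶜ := fun y hy hxy => hxK (Set.mem_singleton_iff.mp hxy ▸ hy)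
  obtain ⟨U, hKU, hUopen, hUW⟩ :=
    exists_open_subgroup_between hK (isClosed_singleton.isOpen_compl) hsub
  have : x ∈ U := by
    have := Subgroup.mem_iInf.mp hx U
    simpa using Subgroup.mem_iInf.mp (this) ⟨hKU, hUopen⟩
  exact hUW this rfl

/-- Key step: for any open subgroup `V` containing `H^{[i]}`, there is an open subgroup
`U ⊇ H` with `U^{[i]} ≤ V`. -/
lemma exists_open_closedDerivedSeries_le {H : Subgroup G} (hH : IsClosed (H : Set G)) :
    ∀ i, ∀ V : Subgroup G, IsOpen (V : Set G) → closedDerivedSeries G H i ≤ V →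
      ∃ U : Subgroup G, H ≤ U ∧ IsOpen (U : Set G) ∧ closedDerivedSeries G U i ≤ V
  | 0, V, hVopen, hHV => ⟨V, hHV, hVopen, le_rfl⟩
  | (i + 1), V, hVopen, hHV => by
      set K := closedDerivedSeries G H i with hKdef
      have hKclosed : IsClosed (K : Set G) := closedDerivedSeries_isClosed hH i
      have hVclosed : IsClosed (V : Set G) := V.isClosed_of_isOpen hVopen
      -- commutators of K land in V
      have hcomm : ∀ x ∈ K, ∀ y ∈ K, ⁅x, y⁆ ∈ V := fun x hx y hy =>
        hHV (Subgroup.le_topologicalClosure _ (Subgroup.commutator_mem_commutator hx hy))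
      -- continuity of the commutator map
      have hfcont : Continuous (fun p : G × G => ⁅p.1, p.2⁆) := by
        simp only [commutatorElement_def]
        fun_prop
      have hpre : (K : Set G) ×ˢ (K : Set G) ⊆
          (fun p : G × G => ⁅p.1, p.2⁆) ⁻¹' (V : Set G) := by
        rintro ⟨x, y⟩ ⟨hx, hy⟩
        exact hcomm x hx y hy
      obtain ⟨W₁, W₂, hW₁, hW₂, hKW₁, hKW₂, hWsub⟩ :=
        generalized_tube_lemma hKclosed.isCompact hKclosed.isCompact
          (hVopen.preimage hfcont) hpre
      obtain ⟨V', hKV', hV'open, hV'W⟩ :=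
        exists_open_subgroup_between hKclosed (hW₁.inter hW₂)
          (Set.subset_inter hKW₁ hKW₂)
      have hV'comm : ⁅V', V'⁆ ≤ V := by
        rw [Subgroup.commutator_le]
        intro g₁ hg₁ g₂ hg₂
        exact hWsub (Set.mk_mem_prod (hV'W hg₁).1 (hV'W hg₂).2)
      obtain ⟨U, hHU, hUopen, hUle⟩ :=
        exists_open_closedDerivedSeries_le hH i V' hV'open hKV'
      refine ⟨U, hHU, hUopen, ?_⟩
      refine Subgroup.topologicalClosure_minimal _ ?_ hVclosed
      exact le_trans (Subgroup.commutator_mono hUle hUle) hV'comm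

end Aux

/-- For a profinite group `G`, a closed subgroup `H` and every `i ≥ 1`,
the intersection of `U^{[i]}` over all open subgroups `U` of `G` containing `H`
equals `H^{[i]}` (closed derived series). -/
theorem iInf_closedDerivedSeries_open_subgroups
    (G : Type*) [Group G] [TopologicalSpace G] [IsTopologicalGroup G]
    [CompactSpace G] [T2Space G] [TotallyDisconnectedSpace G]
    (H : Subgroup G) (hH : IsClosed (H : Set G)) (i : ℕ) (hi : 1 ≤ i) :
    (⨅ U ∈ {U : Subgroup G | H ≤ U ∧ IsOpen (U : Set G)}, closedDerivedSeries G U i)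
      = closedDerivedSeries G H i := by
  refine le_antisymm ?_ (le_iInf₂ fun U hU => closedDerivedSeries_mono hU.1 i)
  have hHi : IsClosed ((closedDerivedSeries G H i : Set G)) :=
    closedDerivedSeries_isClosed hH i
  conv_rhs => rw [closed_subgroup_eq_iInf hHi]
  refine le_iInf₂ fun V hV => ?_
  obtain ⟨U, hHU, hUopen, hUle⟩ :=
    exists_open_closedDerivedSeries_le hH i V hV.2 hV.1
  exact le_trans (iInf₂_le U ⟨hHU, hUopen⟩) hUle
end

section
/- Let 1 → Δ → Π → G → 1 be a short exact sequence of profinite groups with Δ topologically finitely generated. Let s and t be two continuous sections of the projection Π → G. Suppose that for every open subgroup Π' of Π of the form Δ's(G) with Δ' an open characteristic subgroup of Δ, there exists δ ∈ Δ such that δ t(g) δ^{-1} ∈ Π' for all g ∈ G. Then s and t are Δ-conjugate, i.e., there exists δ ∈ Δ with s(g) = δ t(g) δ^{-1} for all g ∈ G. -/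
/-- In a compact group `P` with a closed normal subgroup `K`, every subgroup `H ≤ K`
which is open in `K` contains a subgroup `N` which is still open in `K` and is
normalized by all of `P`. -/
lemma exists_conj_stable_core {P : Type*} [Group P] [TopologicalSpace P] [IsTopologicalGroup P]
    [CompactSpace P] [T2Space P] {K : Subgroup P} (hKnorm : K.Normal)
    (hKc : IsClosed (K : Set P))
    (H : Subgroup P) (hHK : H ≤ K)
    (hHo : IsOpen (((↑) ⁻¹' (H : Set P)) : Set K)) :
    ∃ N : Subgroup P, N ≤ H ∧ IsOpen (((↑) ⁻¹' (N : Set P)) : Set K) ∧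
      ∀ x : P, ∀ d ∈ N, x * d * x⁻¹ ∈ N := by
  haveI : CompactSpace K := isCompact_iff_compactSpace.mp hKc.isCompact
  obtain ⟨U, hUo, hU⟩ := isOpen_induced_iff.mp hHo
  have hUH : ∀ p : P, p ∈ K → (p ∈ U ↔ p ∈ H) := by
    intro p hp
    exact Set.ext_iff.mp hU ⟨p, hp⟩
  -- `H` is compact as a subset of `P`.
  have hHclosedK : IsClosed (((↑) ⁻¹' (H : Set P)) : Set K) := by
    have h1 : (((↑) ⁻¹' (H : Set P)) : Set K) = ((H.subgroupOf K : Subgroup K) : Set K) := by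
      rw [Subgroup.coe_subgroupOf]; rfl
    rw [h1] at hHo ⊢
    exact Subgroup.isClosed_of_isOpen _ hHo
  have hHcpt : IsCompact (H : Set P) := by
    have h1 : IsCompact (((↑) ⁻¹' (H : Set P)) : Set K) := hHclosedK.isCompact
    have h2 := h1.image continuous_subtype_val
    have h3 : Subtype.val '' (((↑) ⁻¹' (H : Set P)) : Set K) = (H : Set P) :=
      Set.ext fun p => ⟨fun ⟨q, hq, he⟩ => he ▸ hq, fun hp => ⟨⟨p, hHK hp⟩, hp, rfl⟩⟩
    rwa [h3] at h2
  -- the set of `x` such that `x⁻¹ H x ⊆ H` is open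
  set W : Set P := {x : P | ∀ h ∈ (H : Set P), x⁻¹ * h * x ∈ H} with hW
  have hWo : IsOpen W := by
    rw [isOpen_iff_forall_mem_open]
    intro x₀ hx₀
    have hno : IsOpen {q : P × P | q.1⁻¹ * q.2 * q.1 ∈ U} :=
      hUo.preimage (((continuous_fst.inv.mul continuous_snd).mul continuous_fst))
    have hsub : ({x₀} : Set P) ×ˢ (H : Set P) ⊆ {q : P × P | q.1⁻¹ * q.2 * q.1 ∈ U} := by
      rintro ⟨a, b⟩ ⟨ha, hb⟩
      rcases ha with rfl
      have hmem : a⁻¹ * b * a ∈ H := hx₀ b hb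
      exact (hUH _ (hHK hmem)).mpr hmem
    obtain ⟨u, v, hu, hv, hx₀u, hHv, huv⟩ :=
      generalized_tube_lemma isCompact_singleton hHcpt hno hsub
    refine ⟨u, ?_, hu, hx₀u rfl⟩
    intro x hx h hh
    have hxU : x⁻¹ * h * x ∈ U := huv (Set.mk_mem_prod hx (hHv hh))
    have hxK : x⁻¹ * h * x ∈ K := by
      have := hKnorm.conj_mem h (hHK hh) x⁻¹
      rwa [inv_inv] at this
    exact (hUH _ hxK).mp hxU
  have h1W : (1 : P) ∈ W := by
    intro h hh
    simpa using hh
  -- cover `P` by translates of `W`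
  have hcover : (Set.univ : Set P) ⊆ ⋃ y : P, (fun z => y * z) ⁻¹' W := by
    intro x _
    refine Set.mem_iUnion.mpr ⟨x⁻¹, ?_⟩
    show x⁻¹ * x ∈ W
    simpa using h1W
  obtain ⟨T, hT⟩ := isCompact_univ.elim_finite_subcover (fun y : P => (fun z => y * z) ⁻¹' W)
    (fun y => hWo.preimage (continuous_const.mul continuous_id)) hcover
  refine ⟨⨅ t ∈ T, Subgroup.comap ((MulAut.conj t).toMonoidHom) H, ?_, ?_, ?_⟩ <;>
    [skip; skip; skip]
  all_goals {
    have hmemN : ∀ d : P, (d ∈ ⨅ t ∈ T, Subgroup.comap ((MulAut.conj t).toMonoidHom) H) ↔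
        ∀ t ∈ T, t * d * t⁻¹ ∈ H := by
      intro d
      simp [Subgroup.mem_iInf, Subgroup.mem_comap, MulAut.conj_apply]
    have hstar : ∀ x : P, ∀ d, (d ∈ ⨅ t ∈ T, Subgroup.comap ((MulAut.conj t).toMonoidHom) H) →
        x * d * x⁻¹ ∈ H := by
      intro x d hd
      obtain ⟨t, htT, htW⟩ : ∃ t ∈ T, t * x⁻¹ ∈ W := by
        have := hT (Set.mem_univ x⁻¹)
        simpa using this
      have hh : t * d * t⁻¹ ∈ H := (hmemN d).mp hd t htT
      have := htW _ hh
      have heq : (t * x⁻¹)⁻¹ * (t * d * t⁻¹) * (t * x⁻¹) = x * d * x⁻¹ := by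
        group
      rwa [heq] at this
    first
    | -- N ≤ H
      (intro d hd
       have := hstar 1 d hd
       simpa using this)
    | -- openness
      (have hset : (((↑) ⁻¹' ((↑(⨅ t ∈ T, Subgroup.comap ((MulAut.conj t).toMonoidHom) H)) : Set P)) : Set K) =
          ⋂ t ∈ T, (fun k : K => ((⟨t * ↑k * t⁻¹, hKnorm.conj_mem _ k.2 t⟩ : K))) ⁻¹'
            (((↑) ⁻¹' (H : Set P)) : Set K) := by
        ext k
        simp only [Set.mem_preimage, SetLike.mem_coe, Set.mem_iInter]
        exact hmemN ↑k
       rw [hset]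
       exact isOpen_biInter_finset fun t _ =>
        hHo.preimage (Continuous.subtype_mk
          ((continuous_const.mul continuous_subtype_val).mul continuous_const) _))
    | -- normalized
      (intro x d hd
       rw [hmemN]
       intro t htT
       have := hstar (t * x) d hd
       have heq : t * x * d * (t * x)⁻¹ = t * (x * d * x⁻¹) * t⁻¹ := by group
       rwa [heq] at this)
  }



/-- Let `1 → Δ → Π → G → 1` be a short exact sequence of profinite groups with
`Δ = ker pr` topologically finitely generated, and let `s`, `t` be continuous sections of
`pr`.  If for every characteristic neighbourhood `Π' = Δ' s(G)` of `s` (where `Δ'` is an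
open subgroup of `Δ` normalized by all of `Π`) some `Δ`-conjugate of `t` takes values in
`Π'`, then `s` and `t` are `Δ`-conjugate. -/
theorem sections_conjugate_of_conjugate_into_characteristic_neighbourhoods
    (P G : Type*) [Group P] [TopologicalSpace P] [IsTopologicalGroup P]
    [CompactSpace P] [T2Space P] [TotallyDisconnectedSpace P]
    [Group G] [TopologicalSpace G] [IsTopologicalGroup G]
    [CompactSpace G] [T2Space G] [TotallyDisconnectedSpace G]
    (pr : P →* G) (hpr_cont : Continuous pr) (hpr_surj : Function.Surjective pr)
    -- Δ = ker pr is topologically finitely generated: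
    (hfg : ∃ S : Set P, S.Finite ∧ S ⊆ (pr.ker : Set P) ∧
      (Subgroup.closure S).topologicalClosure = pr.ker)
    (s t : G →* P) (hs_cont : Continuous s) (ht_cont : Continuous t)
    (hs_sec : ∀ g, pr (s g) = g) (ht_sec : ∀ g, pr (t g) = g)
    (h : ∀ Δ' : Subgroup P, Δ' ≤ pr.ker →
      -- Δ' is open in Δ = ker pr:
      IsOpen (((↑) ⁻¹' (Δ' : Set P)) : Set pr.ker) →
      -- Δ' is normalized by all of Π (characteristic neighbourhood):
      (∀ x : P, ∀ d ∈ Δ', x * d * x⁻¹ ∈ Δ') →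
      ∃ δ ∈ pr.ker, ∀ g : G, δ * t g * δ⁻¹ ∈ {x : P | ∃ d ∈ Δ', ∃ h' : G, x = d * s h'}) :
    ∃ δ ∈ pr.ker, ∀ g : G, s g = δ * t g * δ⁻¹ := by
  have hKnorm : pr.ker.Normal := MonoidHom.normal_ker pr
  have hKc : IsClosed (pr.ker : Set P) := by
    have h1 : (pr.ker : Set P) = pr ⁻¹' {1} := by
      ext x; simp [MonoidHom.mem_ker]
    rw [h1]
    exact isClosed_singleton.preimage hpr_cont
  haveI : CompactSpace pr.ker := isCompact_iff_compactSpace.mp hKc.isCompact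
  -- the index type of "valid" subgroups Δ'
  set I := {Δ' : Subgroup P // Δ' ≤ pr.ker ∧ IsOpen (((↑) ⁻¹' (Δ' : Set P)) : Set pr.ker) ∧
    ∀ x : P, ∀ d ∈ Δ', x * d * x⁻¹ ∈ Δ'} with hI
  have hker_open : IsOpen (((↑) ⁻¹' ((pr.ker : Subgroup P) : Set P)) : Set pr.ker) := by
    have : (((↑) ⁻¹' ((pr.ker : Subgroup P) : Set P)) : Set pr.ker) = Set.univ := by
      ext ⟨x, hx⟩; simpa using hx
    rw [this]; exact isOpen_univ
  haveI : Nonempty I := ⟨⟨pr.ker, le_refl _, hker_open, fun x d hd => hKnorm.conj_mem d hd x⟩⟩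
  set Z : I → Set P := fun i => {δ : P | δ ∈ pr.ker ∧ ∀ g : G, δ * t g * δ⁻¹ * (s g)⁻¹ ∈ i.1}
    with hZ
  have hΔclosed : ∀ i : I, IsClosed ((i.1 : Subgroup P) : Set P) := by
    intro i
    have h1 : (((↑) ⁻¹' ((i.1 : Subgroup P) : Set P)) : Set pr.ker)
        = ((i.1.subgroupOf pr.ker : Subgroup pr.ker) : Set pr.ker) := by
      rw [Subgroup.coe_subgroupOf]; rfl
    have h2 : IsClosed (((↑) ⁻¹' ((i.1 : Subgroup P) : Set P)) : Set pr.ker) := by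
      rw [h1]
      exact Subgroup.isClosed_of_isOpen _ (by rw [← h1]; exact i.2.2.1)
    have h3 := (h2.isCompact.image continuous_subtype_val).isClosed
    have h4 : Subtype.val '' (((↑) ⁻¹' ((i.1 : Subgroup P) : Set P)) : Set pr.ker)
        = ((i.1 : Subgroup P) : Set P) :=
      Set.ext fun p => ⟨fun ⟨q, hq, he⟩ => he ▸ hq, fun hp => ⟨⟨p, i.2.1 hp⟩, hp, rfl⟩⟩
    rwa [h4] at h3
  have hZclosed : ∀ i : I, IsClosed (Z i) := by
    intro i
    have h1 : Z i = (pr.ker : Set P) ∩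
        ⋂ g : G, (fun δ : P => δ * t g * δ⁻¹ * (s g)⁻¹) ⁻¹' ((i.1 : Subgroup P) : Set P) := by
      ext δ
      simp [hZ, Set.mem_iInter]
    rw [h1]
    exact hKc.inter (isClosed_iInter fun g => (hΔclosed i).preimage
      (((continuous_id.mul continuous_const).mul continuous_inv).mul continuous_const))
  have hZne : ∀ i : I, (Z i).Nonempty := by
    intro i
    obtain ⟨δ, hδker, hδ⟩ := h i.1 i.2.1 i.2.2.1 i.2.2.2
    refine ⟨δ, hδker, fun g => ?_⟩
    obtain ⟨d, hd, g', hg'⟩ := hδ g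
    have hprd : pr d = 1 := i.2.1 hd
    have hδ1 : pr δ = 1 := hδker
    have hpr1 : pr (δ * t g * δ⁻¹) = g := by
      simp [map_mul, map_inv, hδ1, ht_sec]
    have hpr2 : pr (d * s g') = g' := by
      simp [map_mul, hprd, hs_sec]
    have hgg' : g = g' := by rw [← hpr1, hg', hpr2]
    subst hgg'
    have : δ * t g * δ⁻¹ * (s g)⁻¹ = d := by
      rw [hg']; group
    rw [this]; exact hd
  have hZdir : Directed (· ⊇ ·) Z := by
    intro i j
    have hle : i.1 ⊓ j.1 ≤ pr.ker := le_trans inf_le_left i.2.1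
    have hopen : IsOpen (((↑) ⁻¹' ((i.1 ⊓ j.1 : Subgroup P) : Set P)) : Set pr.ker) := by
      have : (((↑) ⁻¹' ((i.1 ⊓ j.1 : Subgroup P) : Set P)) : Set pr.ker)
          = (((↑) ⁻¹' ((i.1 : Subgroup P) : Set P)) : Set pr.ker)
            ∩ (((↑) ⁻¹' ((j.1 : Subgroup P) : Set P)) : Set pr.ker) := by
        ext k; simp [Subgroup.mem_inf]
      rw [this]
      exact i.2.2.1.inter j.2.2.1
    have hnorm : ∀ x : P, ∀ d ∈ i.1 ⊓ j.1, x * d * x⁻¹ ∈ i.1 ⊓ j.1 := by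
      intro x d hd
      exact ⟨i.2.2.2 x d hd.1, j.2.2.2 x d hd.2⟩
    refine ⟨⟨i.1 ⊓ j.1, hle, hopen, hnorm⟩, ?_, ?_⟩
    · exact fun δ hδ => ⟨hδ.1, fun g => (hδ.2 g).1⟩
    · exact fun δ hδ => ⟨hδ.1, fun g => (hδ.2 g).2⟩
  obtain ⟨δ, hδ⟩ := IsCompact.nonempty_iInter_of_directed_nonempty_isCompact_isClosed Z
    hZdir hZne (fun i => (hZclosed i).isCompact) hZclosed
  have hδ' : ∀ i : I, δ ∈ Z i := fun i => Set.mem_iInter.mp hδ i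
  have hδker : δ ∈ pr.ker := (hδ' (Classical.arbitrary I)).1
  refine ⟨δ, hδker, fun g => ?_⟩
  set w : P := δ * t g * δ⁻¹ * (s g)⁻¹ with hw
  have hwker : w ∈ pr.ker := by
    have hδ1 : pr δ = 1 := hδker
    simp [hw, MonoidHom.mem_ker, map_mul, map_inv, hδ1, hs_sec, ht_sec]
  have hw1 : w = 1 := by
    by_contra hne
    have hwne : (⟨w, hwker⟩ : pr.ker) ≠ 1 := fun hc => hne (congrArg Subtype.val hc)
    have hoc : IsOpen ({(⟨w, hwker⟩ : pr.ker)}ᶜ : Set pr.ker) := isOpen_compl_singleton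
    have h1c : (1 : pr.ker) ∈ ({(⟨w, hwker⟩ : pr.ker)}ᶜ : Set pr.ker) :=
      Set.mem_compl_singleton_iff.mpr hwne.symm
    obtain ⟨V, hVclopen, h1V, hVsub⟩ := compact_exists_isClopen_in_isOpen hoc h1c
    obtain ⟨H', hH'⟩ :=
      IsTopologicalGroup.exist_openNormalSubgroup_sub_clopen_nhds_of_one hVclopen h1V
    set H : Subgroup P := Subgroup.map pr.ker.subtype H'.toOpenSubgroup.toSubgroup with hH
    have hHle : H ≤ pr.ker := by
      rintro x ⟨y, hy, rfl⟩
      exact y.2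
    have hHopen : IsOpen (((↑) ⁻¹' (H : Set P)) : Set pr.ker) := by
      have : (((↑) ⁻¹' (H : Set P)) : Set pr.ker)
          = ((H'.toOpenSubgroup.toSubgroup : Subgroup pr.ker) : Set pr.ker) := by
        ext k
        constructor
        · rintro ⟨y, hy, he⟩
          have : y = k := Subtype.ext he
          rwa [← this]
        · intro hk
          exact ⟨k, hk, rfl⟩
      rw [this]
      exact H'.toOpenSubgroup.isOpen
    obtain ⟨N, hNle, hNopen, hNnorm⟩ := exists_conj_stable_core hKnorm hKc H hHle hHopen
    have hiN : δ ∈ Z ⟨N, le_trans hNle hHle, hNopen, hNnorm⟩ :=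
      hδ' ⟨N, le_trans hNle hHle, hNopen, hNnorm⟩
    have hwN : w ∈ N := hiN.2 g
    obtain ⟨y, hy, hyw⟩ := hNle hwN
    have : y = ⟨w, hwker⟩ := Subtype.ext hyw
    rw [this] at hy
    exact hVsub (hH' hy) rfl
  have : δ * t g * δ⁻¹ = s g := by
    have := mul_inv_eq_one.mp hw1
    exact this
  exact this.symm
end

section
/- Let 1 → Δ → Π → G → 1 be a short exact sequence of profinite groups such that every closed subgroup D of Π mapping isomorphically onto an open subgroup of G has trivial centralizer in Δ. Let s and t be two sections of the projection Π → G, and let H be an open subgroup of G such that s(h) = t(h) for all h ∈ H. Then s = t. -/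
/-- A quasi-section of `pr : Π → G` is a closed subgroup of `Π` mapping isomorphically
(via `pr`) onto an open subgroup of `G`: it is closed, `pr` is injective on it, and its
image is open. -/
def IsQuasiSection {P G : Type*} [Group P] [TopologicalSpace P] [Group G]
    [TopologicalSpace G] (pr : P →* G) (D : Subgroup P) : Prop :=
  IsClosed (D : Set P) ∧ IsOpen ((D.map pr : Subgroup G) : Set G) ∧
    ∀ d ∈ D, pr d = 1 → d = 1

/-- Let `1 → Δ → Π → G → 1` be a short exact sequence of profinite groups
such that every quasi-section has trivial geometric centralizer (centralizer in
`Δ = ker pr`).  If two sections `s`, `t` agree on an open subgroup `H` of `G`, then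
`s = t`. -/
theorem sections_eq_of_eq_on_open_subgroup
    (P G : Type*) [Group P] [TopologicalSpace P] [IsTopologicalGroup P]
    [CompactSpace P] [T2Space P] [TotallyDisconnectedSpace P]
    [Group G] [TopologicalSpace G] [IsTopologicalGroup G]
    [CompactSpace G] [T2Space G] [TotallyDisconnectedSpace G]
    (pr : P →* G) (hpr_cont : Continuous pr) (hpr_surj : Function.Surjective pr)
    (hQS : ∀ D : Subgroup P, IsQuasiSection pr D →
      ∀ δ ∈ pr.ker, (∀ d ∈ D, δ * d = d * δ) → δ = 1)
    (s t : G →* P) (hs_cont : Continuous s) (ht_cont : Continuous t)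
    (hs_sec : ∀ g, pr (s g) = g) (ht_sec : ∀ g, pr (t g) = g)
    (H : Subgroup G) (hH : IsOpen (H : Set G))
    (hst : ∀ h ∈ H, s h = t h) :
    s = t := by
  ext g
  -- the open subgroup K = H ∩ g⁻¹ H g
  set K : Subgroup G := H ⊓ Subgroup.comap ((MulAut.conj g).toMonoidHom) H with hK
  have hKmem : ∀ k, k ∈ K ↔ k ∈ H ∧ g * k * g⁻¹ ∈ H := by
    intro k
    simp [hK, Subgroup.mem_inf, Subgroup.mem_comap, MulAut.conj_apply]
  have hKopen : IsOpen (K : Set G) := by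
    apply IsOpen.inter hH
    exact hH.preimage ((continuous_const.mul continuous_id).mul continuous_const)
  have hKclosed : IsClosed (K : Set G) := Subgroup.isClosed_of_isOpen K hKopen
  have hKcompact : IsCompact (K : Set G) := hKclosed.isCompact
  set D : Subgroup P := K.map s with hD
  have hDset : (D : Set P) = s '' (K : Set G) := by simp [hD, Subgroup.coe_map]
  have hprs : pr.comp s = MonoidHom.id G := by ext x; simp [hs_sec]
  have hDQS : IsQuasiSection pr D := by
    refine ⟨?_, ?_, ?_⟩
    · rw [hDset]
      exact (hKcompact.image hs_cont).isClosed
    · have : D.map pr = K := by rw [hD, Subgroup.map_map, hprs, Subgroup.map_id]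
      rw [this]; exact hKopen
    · rintro d hd hd1
      rw [hD] at hd
      obtain ⟨k, hk, rfl⟩ := hd
      rw [hs_sec] at hd1
      rw [hd1, map_one]
  set δ : P := (s g)⁻¹ * t g with hδ
  have hδker : δ ∈ pr.ker := by
    simp [hδ, MonoidHom.mem_ker, hs_sec, ht_sec]
  have hcomm : ∀ d ∈ D, δ * d = d * δ := by
    rintro d hd
    rw [hD] at hd
    obtain ⟨k, hk, rfl⟩ := hd
    rw [SetLike.mem_coe, hKmem] at hk
    have h1 : s k = t k := hst k hk.1
    have h2 : s (g * k * g⁻¹) = t (g * k * g⁻¹) := hst _ hk.2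
    simp only [map_mul, map_inv, h1] at h2
    rw [hδ]
    -- h2 : s g * t k * (s g)⁻¹ = t g * t k * (t g)⁻¹
    have : (s g)⁻¹ * (t g * t k * (t g)⁻¹) * s g = t k := by
      rw [← h2]; group
    rw [h1]
    calc (s g)⁻¹ * t g * t k = (s g)⁻¹ * (t g * t k * (t g)⁻¹) * s g * ((s g)⁻¹ * t g) := by
          group
      _ = t k * ((s g)⁻¹ * t g) := by rw [this]
  have := hQS D hDQS δ hδker hcomm
  have : (s g)⁻¹ * t g = 1 := this
  have := mul_eq_one_iff_inv_eq.mp this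
  rw [inv_inv] at this
  exact this
end

section
/- Let 1 → Δ → Π → G → 1 be an exact sequence of profinite groups in which every quasi-section has trivial geometric centralizer, let D be a quasi-section surjecting onto G, and let Π' be an open subgroup of Π with Π' ∩ Δ = Δ' of index k in Δ and with Π' surjecting onto G. Choose representatives δ_1,…,δ_k of the right cosets of Δ' in Δ and set D_j = δ_j D δ_j^{-1}, D'_j = Π' ∩ D_j. Then: (a) each D'_j has trivial geometric centralizer in Δ'; (b) the Δ'-conjugacy classes of D'_1,…,D'_k are pairwise disjoint; (c) every subgroup of Π' of the form Π' ∩ δ D δ^{-1} with δ ∈ Δ is Δ'-conjugate to some D'_j. In other words, the restriction to Π' of the Δ-conjugacy class of D decomposes as the disjoint union of the k Δ'-conjugacy classes of the D'_j. -/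
set_option linter.unusedSectionVars false
set_option linter.unusedVariables false
set_option linter.unnecessarySimpa false

section Aux

variable {P G : Type*} [Group P] [TopologicalSpace P] [IsTopologicalGroup P]
    [CompactSpace P] [T2Space P]
    [Group G] [TopologicalSpace G] [T2Space G]

private lemma conjHom_comp (a b : P) :
    (MulAut.conj a).toMonoidHom.comp (MulAut.conj b).toMonoidHom
      = (MulAut.conj (a * b)).toMonoidHom := by
  ext x
  simp [MulAut.conj, mul_assoc]

private lemma qs_injOn {pr : P →* G} {E : Subgroup P}
    (hE : ∀ d ∈ E, pr d = 1 → d = 1)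
    {a b : P} (ha : a ∈ E) (hb : b ∈ E) (h : pr a = pr b) : a = b := by
  have hm : a⁻¹ * b ∈ E := mul_mem (inv_mem ha) hb
  have h1 : pr (a⁻¹ * b) = 1 := by rw [map_mul, map_inv, h, inv_mul_cancel]
  have := hE _ hm h1
  rwa [inv_mul_eq_one] at this

/-- conjugation is a homeomorphism; images of closed/open sets stay closed/open -/
private lemma isClosed_map_conj (a : P) {S : Subgroup P} (hS : IsClosed (S : Set P)) :
    IsClosed ((S.map (MulAut.conj a).toMonoidHom : Subgroup P) : Set P) := by
  have he : ((S.map (MulAut.conj a).toMonoidHom : Subgroup P) : Set P)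
      = ((Homeomorph.mulLeft a).trans (Homeomorph.mulRight a⁻¹)) '' (S : Set P) := by
    ext x
    simp [Subgroup.mem_map, Set.mem_image, MulAut.conj]
  rw [he]
  exact ((Homeomorph.mulLeft a).trans (Homeomorph.mulRight a⁻¹)).isClosedMap _ hS

private lemma isOpen_map_conj (a : P) {S : Subgroup P} (hS : IsOpen (S : Set P)) :
    IsOpen ((S.map (MulAut.conj a).toMonoidHom : Subgroup P) : Set P) := by
  have he : ((S.map (MulAut.conj a).toMonoidHom : Subgroup P) : Set P)
      = ((Homeomorph.mulLeft a).trans (Homeomorph.mulRight a⁻¹)) '' (S : Set P) := by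
    ext x
    simp [Subgroup.mem_map, Set.mem_image, MulAut.conj]
  rw [he]
  exact ((Homeomorph.mulLeft a).trans (Homeomorph.mulRight a⁻¹)).isOpenMap _ hS

private lemma map_conj_self {S : Subgroup P} {a : P} (ha : a ∈ S) :
    S.map (MulAut.conj a).toMonoidHom = S := by
  apply le_antisymm
  · rintro x ⟨y, hy, rfl⟩
    exact mul_mem (mul_mem ha hy) (inv_mem ha)
  · intro x hx
    exact ⟨a⁻¹ * x * a, by simpa using mul_mem (mul_mem (inv_mem ha) hx) ha,
      by simp [MulAut.conj, mul_assoc]⟩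

private lemma pr_comp_conj (pr : P →* G) {a : P} (ha : a ∈ pr.ker) :
    pr.comp (MulAut.conj a).toMonoidHom = pr := by
  have h1 : pr a = 1 := MonoidHom.mem_ker.mp ha
  ext x
  simp [MulAut.conj, h1]

/-- conjugate of a full quasi-section by a kernel element is a full quasi-section -/
private lemma qs_conj (pr : P →* G) {E : Subgroup P} (hE : IsQuasiSection pr E)
    (hEsurj : E.map pr = ⊤) {a : P} (ha : a ∈ pr.ker) :
    IsQuasiSection pr (E.map (MulAut.conj a).toMonoidHom) ∧
      (E.map (MulAut.conj a).toMonoidHom).map pr = ⊤ := by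
  have hmap : (E.map (MulAut.conj a).toMonoidHom).map pr = ⊤ := by
    rw [Subgroup.map_map, pr_comp_conj pr ha, hEsurj]
  refine ⟨⟨isClosed_map_conj a hE.1, ?_, ?_⟩, hmap⟩
  · rw [hmap]; simpa using isOpen_univ
  · rintro d ⟨e, he, rfl⟩ hd1
    have hpe : pr e = 1 := by
      have h1 : pr a = 1 := MonoidHom.mem_ker.mp ha
      simpa [MulAut.conj, h1] using hd1
    have := hE.2.2 e he hpe
    simp [this]

/-- intersection of an open subgroup with a full quasi-section is a quasi-section -/
private lemma qs_inter (pr : P →* G) (hpr_cont : Continuous pr)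
    {Q E : Subgroup P} (hQ : IsOpen (Q : Set P))
    (hE : IsQuasiSection pr E) (hEsurj : E.map pr = ⊤) :
    IsQuasiSection pr (Q ⊓ E) := by
  have hQclosed : IsClosed (Q : Set P) := Subgroup.isClosed_of_isOpen Q hQ
  refine ⟨hQclosed.inter hE.1, ?_, fun d hd => hE.2.2 d hd.2⟩
  -- open image
  have hCcl : IsClosed (pr '' ((E : Set P) ∩ (Q : Set P)ᶜ)) := by
    have : IsCompact ((E : Set P) ∩ (Q : Set P)ᶜ) :=
      (hE.1.inter (isClosed_compl_iff.mpr hQ)).isCompact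
    exact (this.image hpr_cont).isClosed
  have heq : (((Q ⊓ E).map pr : Subgroup G) : Set G)
      = (pr '' ((E : Set P) ∩ (Q : Set P)ᶜ))ᶜ := by
    ext g
    constructor
    · rintro ⟨x, hx, rfl⟩
      rintro ⟨y, ⟨hyE, hyQ⟩, hyx⟩
      exact hyQ (qs_injOn hE.2.2 hyE hx.2 hyx ▸ hx.1)
    · intro hg
      have hgm : g ∈ E.map pr := by rw [hEsurj]; trivial
      obtain ⟨e, he, rfl⟩ := Subgroup.mem_map.mp hgm
      refine ⟨e, ⟨?_, he⟩, rfl⟩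
      by_contra h
      exact hg ⟨e, ⟨he, h⟩, rfl⟩
  rw [heq]
  exact hCcl.isOpen_compl

end Aux

/-- splitting of the restriction of the conjugacy class of a quasi-section.
Let `1 → Δ → Π → G → 1` be exact with every quasi-section having trivial geometric
centralizer, `D` a quasi-section surjecting onto `G`, `P'` an open subgroup of `Π`
surjecting onto `G` with `Δ' = P' ∩ Δ` of index `k` in `Δ`, and `δ₁, …, δ_k`
representatives of the right cosets of `Δ'` in `Δ`.  With `D_j = δ_j D δ_j⁻¹` and
`D'_j = P' ∩ D_j`: (a) each `D'_j` has trivial centralizer in `Δ'`; (b) the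
`Δ'`-conjugacy classes of the `D'_j` are pairwise disjoint; (c) every `P' ∩ δDδ⁻¹`
(`δ ∈ Δ`) is `Δ'`-conjugate to some `D'_j`. -/
theorem conjugacy_class_restriction_splits
    (P G : Type*) [Group P] [TopologicalSpace P] [IsTopologicalGroup P]
    [CompactSpace P] [T2Space P] [TotallyDisconnectedSpace P]
    [Group G] [TopologicalSpace G] [IsTopologicalGroup G]
    [CompactSpace G] [T2Space G] [TotallyDisconnectedSpace G]
    (pr : P →* G) (hpr_cont : Continuous pr) (hpr_surj : Function.Surjective pr)
    (hQS : ∀ D : Subgroup P, IsQuasiSection pr D →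
      ∀ δ ∈ pr.ker, (∀ d ∈ D, δ * d = d * δ) → δ = 1)
    (D : Subgroup P) (hD : IsQuasiSection pr D) (hDsurj : D.map pr = ⊤)
    (P' : Subgroup P) (hP'open : IsOpen (P' : Set P)) (hP'surj : P'.map pr = ⊤)
    (k : ℕ) (hk : (P' ⊓ pr.ker).relIndex pr.ker = k)
    (δ : Fin k → P) (hδker : ∀ j, δ j ∈ pr.ker)
    (hcosets : ∀ x ∈ pr.ker, ∃! j : Fin k, x * (δ j)⁻¹ ∈ P') :
    -- (a) trivial geometric centralizers in Δ' = P' ⊓ ker pr: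
    (∀ j : Fin k, ∀ x ∈ P' ⊓ pr.ker,
      (∀ d ∈ P' ⊓ Subgroup.map (MulAut.conj (δ j)).toMonoidHom D, x * d = d * x) → x = 1) ∧
    -- (b) pairwise disjoint Δ'-conjugacy classes:
    (∀ i j : Fin k,
      (∃ x ∈ P' ⊓ pr.ker,
        Subgroup.map (MulAut.conj x).toMonoidHom
            (P' ⊓ Subgroup.map (MulAut.conj (δ i)).toMonoidHom D)
          = P' ⊓ Subgroup.map (MulAut.conj (δ j)).toMonoidHom D) → i = j) ∧
    -- (c) every P' ∩ δDδ⁻¹ is Δ'-conjugate to some D'_j: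
    (∀ y ∈ pr.ker, ∃ j : Fin k, ∃ x ∈ P' ⊓ pr.ker,
      P' ⊓ Subgroup.map (MulAut.conj y).toMonoidHom D
        = Subgroup.map (MulAut.conj x).toMonoidHom
            (P' ⊓ Subgroup.map (MulAut.conj (δ j)).toMonoidHom D)) := by
    -- the conjugates D_j are full quasi-sections
  have hDj : ∀ {a : P}, a ∈ pr.ker →
      IsQuasiSection pr (D.map (MulAut.conj a).toMonoidHom) ∧
        (D.map (MulAut.conj a).toMonoidHom).map pr = ⊤ :=
    fun ha => qs_conj pr hD hDsurj ha
  refine ⟨?_, ?_, ?_⟩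
  · -- (a)
    intro j x hx hcomm
    obtain ⟨hDjqs, hDjsurj⟩ := hDj (hδker j)
    have hqs : IsQuasiSection pr (P' ⊓ D.map (MulAut.conj (δ j)).toMonoidHom) :=
      qs_inter pr hpr_cont hP'open hDjqs hDjsurj
    exact hQS _ hqs x hx.2 hcomm
  · -- (b)
    rintro i j ⟨x, hx, hmap⟩
    have hxP' : x ∈ P' := hx.1
    have hxker : x ∈ pr.ker := hx.2
    set γ : P := (δ j)⁻¹ * x * (δ i) with hγdef
    have hγker : γ ∈ pr.ker := mul_mem (mul_mem (inv_mem (hδker j)) hxker) (hδker i)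
    -- the quasi-section H = δ_i⁻¹ P' δ_i ⊓ D
    set Q : Subgroup P := P'.map (MulAut.conj (δ i)⁻¹).toMonoidHom with hQdef
    have hQopen : IsOpen (Q : Set P) := isOpen_map_conj _ hP'open
    have hHqs : IsQuasiSection pr (Q ⊓ D) :=
      qs_inter pr hpr_cont hQopen hD hDsurj
    have hcent : ∀ d ∈ Q ⊓ D, γ * d = d * γ := by
      rintro d ⟨hdQ, hdD⟩
      obtain ⟨p, hp, hpd⟩ := hdQ
      -- d = δ_i⁻¹ p δ_i, so δ_i d δ_i⁻¹ = p ∈ P'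
      have hconj_mem : δ i * d * (δ i)⁻¹ ∈ P' := by
        have : δ i * d * (δ i)⁻¹ = p := by
          rw [← hpd]; simp [MulAut.conj, mul_assoc]
        rw [this]; exact hp
      have hei : δ i * d * (δ i)⁻¹ ∈ P' ⊓ D.map (MulAut.conj (δ i)).toMonoidHom :=
        ⟨hconj_mem, ⟨d, hdD, rfl⟩⟩
      have hxei : x * (δ i * d * (δ i)⁻¹) * x⁻¹
          ∈ P' ⊓ D.map (MulAut.conj (δ j)).toMonoidHom := by
        rw [← hmap]
        exact ⟨_, hei, rfl⟩
      obtain ⟨-, d', hd', hd'eq⟩ := hxei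
      -- γ d γ⁻¹ = d'
      have hγd : γ * d * γ⁻¹ = d' := by
        have h1 : (MulAut.conj (δ j)).toMonoidHom d' = δ j * d' * (δ j)⁻¹ := rfl
        rw [h1] at hd'eq
        have h2 : γ * d * γ⁻¹ = (δ j)⁻¹ * (x * (δ i * d * (δ i)⁻¹) * x⁻¹) * δ j := by
          rw [hγdef]; group
        rw [h2, ← hd'eq]; group
      have hpreq : pr d' = pr d := by
        have h1 : pr γ = 1 := MonoidHom.mem_ker.mp hγker
        rw [← hγd]
        simp [h1]
      have : d' = d := qs_injOn hD.2.2 hd' hdD hpreq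
      rw [this] at hγd
      calc γ * d = (γ * d * γ⁻¹) * γ := by group
        _ = d * γ := by rw [hγd]
    have hγ1 : γ = 1 := hQS _ hHqs γ hγker hcent
    have hxeq : x = δ j * (δ i)⁻¹ := by
      have : (δ j)⁻¹ * x * (δ i) = 1 := hγ1
      calc x = δ j * ((δ j)⁻¹ * x * δ i) * (δ i)⁻¹ := by group
        _ = δ j * (δ i)⁻¹ := by rw [this]; group
    obtain ⟨m, hm, hmu⟩ := hcosets (δ j) (hδker j)
    have hi : i = m := hmu i (by show δ j * (δ i)⁻¹ ∈ P'; rw [← hxeq]; exact hxP')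
    have hj : j = m := hmu j (by simpa using P'.one_mem)
    rw [hi, hj]
  · -- (c)
    intro y hy
    obtain ⟨j, hj, -⟩ := hcosets y hy
    refine ⟨j, y * (δ j)⁻¹, Subgroup.mem_inf.mpr ⟨hj, mul_mem hy (inv_mem (hδker j))⟩, ?_⟩
    have hinj : Function.Injective (MulAut.conj (y * (δ j)⁻¹)).toMonoidHom :=
      (MulAut.conj (y * (δ j)⁻¹)).injective
    rw [Subgroup.map_inf _ _ _ hinj, Subgroup.map_map, conjHom_comp,
      map_conj_self hj]
    congr 2
    group
end

section
/- Let N = (ℚ/ℤ)^r for some r ≥ 1, with the natural action of the profinite group Ẑ^× by multiplication (homotheties), and let G be a closed subgroup of Ẑ^× such that the quotient Ẑ^×/G has finite exponent. Then the fixed-point group H^0(G, N) is finite and the continuous cohomology group H^1(G, N) has finite exponent. -/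
open scoped DirectSum

instance (p : Nat.Primes) : Fact (p : ℕ).Prime := ⟨p.2⟩

/-- The profinite completion `Ẑ` of `ℤ`, realized (via CRT) as the product of all rings
of `p`-adic integers. -/
abbrev Zhat : Type := ∀ p : Nat.Primes, ℤ_[(p : ℕ)]

/-- `ℤ_p` as a submodule of `ℚ_p`. -/
noncomputable def Zp (p : Nat.Primes) : Submodule ℤ_[(p : ℕ)] ℚ_[(p : ℕ)] :=
  LinearMap.range (Algebra.linearMap ℤ_[(p : ℕ)] ℚ_[(p : ℕ)])

/-- The `p`-primary component `ℚ_p/ℤ_p` of `ℚ/ℤ`. -/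
abbrev QmodZp (p : Nat.Primes) := ℚ_[(p : ℕ)] ⧸ Zp p

/-- `ℚ_p/ℤ_p` is a module over `Ẑ` via the projection `Ẑ → ℤ_p`. -/
noncomputable instance (p : Nat.Primes) : Module Zhat (QmodZp p) :=
  Module.compHom _ (Pi.evalRingHom (fun p : Nat.Primes => ℤ_[(p : ℕ)]) p)

/-- `ℚ/ℤ ≅ ⨁_p ℚ_p/ℤ_p` as a module over `Ẑ`; the units `Ẑˣ` act by homotheties. -/
abbrev QZ : Type := ⨁ p : Nat.Primes, QmodZp p

/-!
Some `s = u ^ d ∈ G` has `s - 1` dividing a positive integer `m` in `Ẑ`: take `u_p` lifting a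
generator of `𝔽_pˣ` when `p > d + 1`, so that `u_p ^ d - 1` is a `p`-adic unit, and
`u_p = (d + 1)! + 1` otherwise, so that `u_p ^ d - 1` is the integer `((d + 1)! + 1) ^ d - 1`.
As `G` is abelian, a cocycle satisfies `(g - 1) f s = (s - 1) f g`, so `m` kills `H¹`, and `H⁰`
lies in the `m`-torsion of `N`, which is finite since `(ℚ_p/ℤ_p)[m]` is finite and vanishes
for `p ∤ m`.
-/

namespace PadicInt

variable {p : ℕ} [Fact p.Prime]

theorem isUnit_natCast_of_not_dvd {n : ℕ} (h : ¬p ∣ n) : IsUnit (n : ℤ_[p]) :=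
  isUnit_iff.2 <| norm_natCast_eq_one_iff.2 <| (Nat.Prime.coprime_iff_not_dvd Fact.out).2 h

theorem isUnit_of_toZMod_ne_zero {x : ℤ_[p]} (h : toZMod x ≠ 0) : IsUnit x := by
  rwa [← IsLocalRing.notMem_maximalIdeal, ← ker_toZMod, RingHom.mem_ker]

theorem exists_isUnit_pow_sub_one {d : ℕ} (hd : 0 < d) (hdp : d + 1 < p) :
    ∃ u : ℤ_[p]ˣ, IsUnit ((u : ℤ_[p]) ^ d - 1) := by
  obtain ⟨g, hg⟩ := IsCyclic.exists_ofOrder_eq_natCard (α := (ZMod p)ˣ)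
  have hgd : g ^ d ≠ 1 := fun h => by
    have := Nat.le_of_dvd hd (hg ▸ orderOf_dvd_of_pow_eq_one h)
    rw [Nat.card_eq_fintype_card, ZMod.card_units] at this
    omega
  obtain ⟨x, hx⟩ := ZMod.ringHom_surjective toZMod (g : ZMod p)
  refine ⟨(isUnit_of_toZMod_ne_zero (hx ▸ g.ne_zero)).unit, isUnit_of_toZMod_ne_zero ?_⟩
  simpa [hx, sub_eq_zero, ← Units.val_pow_eq_pow_val] using hgd

open Nat in
theorem exists_unit_pow_sub_one_dvd {d : ℕ} (hd : 0 < d) :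
    ∃ u : ℤ_[p]ˣ, (u : ℤ_[p]) ^ d - 1 ∣ ((((d + 1)! + 1) ^ d - 1 : ℕ) : ℤ_[p]) := by
  rcases lt_or_ge (d + 1) p with hbig | hsmall
  · obtain ⟨u, hu⟩ := exists_isUnit_pow_sub_one hd hbig
    exact ⟨u, hu.dvd⟩
  · have hp : ¬p ∣ (d + 1)! + 1 := fun h => (Fact.out : p.Prime).one_lt.ne'
      (Nat.dvd_one.1 ((Nat.dvd_add_right (Nat.dvd_factorial (Fact.out : p.Prime).pos hsmall)).1 h))
    refine ⟨(isUnit_natCast_of_not_dvd hp).unit, ?_⟩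
    rw [IsUnit.unit_spec, Nat.cast_sub (Nat.one_le_pow _ _ (Nat.succ_pos _))]
    push_cast
    exact dvd_rfl

end PadicInt

open Nat in
theorem Zhat.exists_unit_pow_sub_one_dvd_natCast {d : ℕ} (hd : 0 < d) :
    ∃ u : Zhatˣ, ∃ m : ℕ, 0 < m ∧ ((u ^ d : Zhatˣ) : Zhat) - 1 ∣ (m : Zhat) := by
  choose u w hw using fun p : Nat.Primes => PadicInt.exists_unit_pow_sub_one_dvd (p := p) hd
  refine ⟨MulEquiv.piUnits.symm u, ((d + 1)! + 1) ^ d - 1, ?_, fun p => w p, funext hw⟩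
  have : 1 < ((d + 1)! + 1) ^ d := Nat.one_lt_pow hd.ne' (by have := (d + 1).factorial_pos; omega)
  omega

namespace QmodZp

variable {p : Nat.Primes}

theorem finite_setOf_pow_nsmul_eq_zero (n : ℕ) :
    {y : QmodZp p | ((p : ℕ) ^ n) • y = 0}.Finite := by
  refine ((Finset.range ((p : ℕ) ^ n)).finite_toSet.image fun k : ℕ =>
    (Submodule.Quotient.mk ((k : ℚ_[(p : ℕ)]) / (p : ℚ_[(p : ℕ)]) ^ n) : QmodZp p)).subset ?_
  intro y hy
  obtain ⟨q, rfl⟩ := Submodule.Quotient.mk_surjective _ y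
  obtain ⟨z, hz⟩ : ∃ z : ℤ_[(p : ℕ)], (z : ℚ_[(p : ℕ)]) = (p : ℚ_[(p : ℕ)]) ^ n * q := by
    simp only [Set.mem_ofPred_eq, ← Submodule.Quotient.mk_smul, Submodule.Quotient.mk_eq_zero] at hy
    simpa [Zp] using hy
  obtain ⟨t, ht⟩ := Ideal.mem_span_singleton'.1 (PadicInt.appr_spec n z)
  refine ⟨z.appr n, by simpa using PadicInt.appr_lt z n, ?_⟩
  rw [Submodule.Quotient.eq]
  have hpn : (p : ℚ_[(p : ℕ)]) ^ n ≠ 0 := pow_ne_zero _ (Nat.cast_ne_zero.2 p.2.ne_zero)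
  have htQ : (t : ℚ_[(p : ℕ)]) * (p : ℚ_[(p : ℕ)]) ^ n = z - (z.appr n : ℚ_[(p : ℕ)]) := by
    exact_mod_cast congrArg ((↑) : ℤ_[(p : ℕ)] → ℚ_[(p : ℕ)]) ht
  refine ⟨-t, ?_⟩
  rw [Algebra.linearMap_apply, PadicInt.algebraMap_apply, PadicInt.coe_neg, eq_sub_iff_add_eq,
    eq_div_iff hpn]
  linear_combination -hz - htQ

theorem pow_factorization_nsmul_eq_zero {m : ℕ} (hm : m ≠ 0) {y : QmodZp p} (hy : m • y = 0) :
    ((p : ℕ) ^ m.factorization p) • y = 0 := by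
  have hc : IsUnit ((m / (p : ℕ) ^ m.factorization p : ℕ) : ℤ_[(p : ℕ)]) :=
    PadicInt.isUnit_natCast_of_not_dvd (Nat.not_dvd_ordCompl p.2 hm)
  rw [← Nat.ordProj_mul_ordCompl_eq_self m p, mul_nsmul,
    ← Nat.cast_smul_eq_nsmul ℤ_[(p : ℕ)]] at hy
  exact hc.smul_eq_zero.1 hy

end QmodZp

theorem QZ.finite_setOf_nsmul_eq_zero {m : ℕ} (hm : m ≠ 0) : {x : QZ | m • x = 0}.Finite := by
  have hcomp : ∀ x ∈ {x : QZ | m • x = 0}, ∀ p : Nat.Primes,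
      ((p : ℕ) ^ m.factorization p) • x p = 0 := fun x hx p =>
    QmodZp.pow_factorization_nsmul_eq_zero hm <| by
      rw [← DFinsupp.nsmul_apply, hx.out, DFinsupp.zero_apply]
  have : Finite {p : Nat.Primes // (p : ℕ) ∣ m} :=
    Finite.of_injective (fun p => (⟨p.1, Nat.mem_divisors.2 ⟨p.2, hm⟩⟩ : m.divisors))
      fun p q h => Subtype.ext <| Subtype.ext <| by simpa using h
  have hpi : (Set.univ.pi fun p : {p : Nat.Primes // (p : ℕ) ∣ m} =>
      {y : QmodZp p | ((p : ℕ) ^ m.factorization p) • y = 0}).Finite :=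
    Set.Finite.pi fun p => QmodZp.finite_setOf_pow_nsmul_eq_zero _
  refine Set.Finite.of_finite_image (f := fun x (p : {p : Nat.Primes // (p : ℕ) ∣ m}) => x p)
    (hpi.subset ?_) ?_
  · rintro _ ⟨x, hx, rfl⟩ p -
    exact hcomp x hx p
  · intro x hx y hy hxy
    ext p
    by_cases hp : (p : ℕ) ∣ m
    · exact congrFun hxy ⟨p, hp⟩
    · have h := fun z hz => hcomp z hz p
      simp only [Nat.factorization_eq_zero_of_not_dvd hp, pow_zero, one_smul] at h
      rw [h x hx, h y hy]

section Cohomology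

variable {R M : Type*} [CommRing R] [AddCommGroup M] [Module R M]

theorem nsmul_eq_smul_smul_sub_self {s w : R} {m : ℕ} (hw : (m : R) = (s - 1) * w) (x : M) :
    m • x = w • (s • x - x) := by
  rw [← Nat.cast_smul_eq_nsmul R, hw, mul_comm, mul_smul, sub_smul, one_smul]

theorem nsmul_eq_zero_of_smul_eq_self {s : Rˣ} {m : ℕ} (hs : (s : R) - 1 ∣ (m : R)) {x : M}
    (hx : s • x = x) : m • x = 0 := by
  obtain ⟨w, hw⟩ := hs
  rw [nsmul_eq_smul_smul_sub_self hw, ← Units.smul_def, hx, sub_self, smul_zero]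

theorem smul_sub_self_eq_of_cocycle {G A : Type*} [Group G] [AddCommGroup A]
    [DistribMulAction G A] {f : G → A} (hf : ∀ g h : G, f (g * h) = f g + g • f h) {g h : G}
    (hgh : Commute g h) :
    g • f h - f h = h • f g - f g := by
  rw [sub_eq_sub_iff_add_eq_add, add_comm, ← hf, hgh.eq, hf, add_comm]

theorem exists_nsmul_eq_smul_sub_self_of_cocycle {G : Subgroup Rˣ} {s : Rˣ} (hsG : s ∈ G) {m : ℕ}
    (hs : (s : R) - 1 ∣ (m : R)) (f : G → M) (hf : ∀ g h : G, f (g * h) = f g + (g : Rˣ) • f h) :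
    ∃ x : M, ∀ g : G, m • f g = (g : Rˣ) • x - x := by
  obtain ⟨w, hw⟩ := hs
  refine ⟨w • f ⟨s, hsG⟩, fun g => ?_⟩
  rw [nsmul_eq_smul_smul_sub_self hw, ← Units.smul_def, smul_comm (g : Rˣ) w, ← smul_sub]
  exact congrArg (w • ·) (smul_sub_self_eq_of_cocycle hf (Commute.all g ⟨s, hsG⟩)).symm

end Cohomology

theorem h0_finite_and_h1_finite_exponent_of_finite_coexponent_general
    (r : ℕ)
    (G : Subgroup (Zhat)ˣ)
    (hG_coexp : ∃ d : ℕ, 0 < d ∧ ∀ u : (Zhat)ˣ, u ^ d ∈ G) :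
    ({x : Fin r → QZ | ∀ g ∈ G, g • x = x}.Finite) ∧
      (∃ m : ℕ, 0 < m ∧ ∀ f : G → (Fin r → QZ), IsLocallyConstant f →
        (∀ g h : G, f (g * h) = f g + (g : (Zhat)ˣ) • f h) →
        ∃ x : Fin r → QZ, ∀ g : G, m • f g = (g : (Zhat)ˣ) • x - x) := by
  obtain ⟨d, hd, hG⟩ := hG_coexp
  obtain ⟨u, m, hm, hum⟩ := Zhat.exists_unit_pow_sub_one_dvd_natCast hd
  refine ⟨?_, m, hm, fun f _ hf => exists_nsmul_eq_smul_sub_self_of_cocycle (hG u) hum f hf⟩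
  refine (Set.Finite.pi fun _ : Fin r => QZ.finite_setOf_nsmul_eq_zero hm.ne').subset
    fun x hx i _ => ?_
  exact congrFun (nsmul_eq_zero_of_smul_eq_self (M := Fin r → QZ) hum (hx _ (hG u))) i

/-- Let `N = (ℚ/ℤ)^r` (`r ≥ 1`) with `Ẑˣ` acting by homotheties, and let
`G` be a closed subgroup of `Ẑˣ` of finite coexponent (`Ẑˣ/G` has finite exponent, i.e.
`∃ d > 0, ∀ u, u ^ d ∈ G`).  Then `H⁰(G, N)` is finite and the continuous cohomology
group `H¹(G, N)` has finite exponent (every class killed by a uniform `m > 0`; classes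
are represented by locally constant cocycles `G → N`, `N` being discrete). -/
theorem h0_finite_and_h1_finite_exponent_of_finite_coexponent
    (r : ℕ) (hr : 1 ≤ r)
    (G : Subgroup (Zhat)ˣ) (hG_closed : IsClosed (G : Set (Zhat)ˣ))
    (hG_coexp : ∃ d : ℕ, 0 < d ∧ ∀ u : (Zhat)ˣ, u ^ d ∈ G) :
    ({x : Fin r → QZ | ∀ g ∈ G, g • x = x}.Finite) ∧
      (∃ m : ℕ, 0 < m ∧ ∀ f : G → (Fin r → QZ), IsLocallyConstant f →
        (∀ g h : G, f (g * h) = f g + (g : (Zhat)ˣ) • f h) →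
        ∃ x : Fin r → QZ, ∀ g : G, m • f g = (g : (Zhat)ˣ) • x - x) :=
  h0_finite_and_h1_finite_exponent_of_finite_coexponent_general r G hG_coexp
end

section
/- Let Δ be a profinite group, m ≥ 2, and let U be an open normal subgroup of Δ[m] = Δ/Δ^{[m]} such that Δ[m]/U is abelian. Let Δ' be the preimage of U under the quotient map Δ → Δ[m]. Then the quotient map Δ' → Δ'[m-1] = Δ'/Δ'^{[m-1]} factors through the quotient Δ' → U, i.e., Δ' ∩ Δ^{[m]} ⊆ Δ'^{[m-1]}. -/
lemma closedDerivedSeries_succ_top_le (Δ : Type*) [Group Δ] [TopologicalSpace Δ]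
    [IsTopologicalGroup Δ] (Δ' : Subgroup Δ) (hopen : IsOpen (Δ' : Set Δ))
    (habelian : (⁅(⊤ : Subgroup Δ), (⊤ : Subgroup Δ)⁆ : Subgroup Δ) ≤ Δ') (k : ℕ) :
    closedDerivedSeries Δ ⊤ (k + 1) ≤ closedDerivedSeries Δ Δ' k := by
  induction k with
  | zero =>
      exact Subgroup.topologicalClosure_minimal _ habelian (Δ'.isClosed_of_isOpen hopen)
  | succ k ih =>
      show (⁅_, _⁆ : Subgroup Δ).topologicalClosure ≤ (⁅_, _⁆ : Subgroup Δ).topologicalClosure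
      exact Subgroup.topologicalClosure_minimal _
        ((Subgroup.commutator_mono ih ih).trans (Subgroup.le_topologicalClosure _))
        (Subgroup.isClosed_topologicalClosure _)

/-- Let `Δ` be a profinite group, `m ≥ 2`, and `U` an open normal subgroup of
`Δ[m] = Δ/Δ^{[m]}` with abelian quotient `Δ[m]/U`; let `Δ'` be the preimage of `U` in `Δ`.
Then `Δ' ∩ Δ^{[m]} ⊆ Δ'^{[m-1]}`.  We express the subgroup `U` of the quotient by its
preimage `Δ'`: a subgroup of `Δ` containing `Δ^{[m]}`, which is open and normal, with
`Δ[m]/U` abelian, i.e. `⁅Δ, Δ⁆ ≤ Δ'`. -/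
theorem preimage_inter_derived_le_closedDerivedSeries
    (Δ : Type*) [Group Δ] [TopologicalSpace Δ] [IsTopologicalGroup Δ]
    [CompactSpace Δ] [T2Space Δ] [TotallyDisconnectedSpace Δ]
    (m : ℕ) (hm : 2 ≤ m)
    (Δ' : Subgroup Δ)
    (hcontains : closedDerivedSeries Δ ⊤ m ≤ Δ')
    (hopen : IsOpen (Δ' : Set Δ))
    (hnormal : Δ'.Normal)
    (habelian : (⁅(⊤ : Subgroup Δ), (⊤ : Subgroup Δ)⁆ : Subgroup Δ) ≤ Δ') :
    Δ' ⊓ closedDerivedSeries Δ ⊤ m ≤ closedDerivedSeries Δ Δ' (m - 1) := by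
  have hm' : m - 1 + 1 = m := by omega
  calc Δ' ⊓ closedDerivedSeries Δ ⊤ m ≤ closedDerivedSeries Δ ⊤ m := inf_le_right
    _ = closedDerivedSeries Δ ⊤ (m - 1 + 1) := by rw [hm']
    _ ≤ closedDerivedSeries Δ Δ' (m - 1) :=
        closedDerivedSeries_succ_top_le Δ Δ' hopen habelian (m - 1)
end

section
/- Let Δ be a profinite group and H an open normal subgroup of Δ such that every open subgroup V of Δ has torsion-free abelianization V^{ab}. Let H^{[sol]} = ∩_{m≥1} H^{[m]} be the intersection of the closed derived series of H. Then the quotient group Δ/H^{[sol]} is torsion-free. -/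
section Aux

variable {Δ : Type*} [Group Δ] [TopologicalSpace Δ] [IsTopologicalGroup Δ]

lemma Subgroup.topologicalClosure_mono' {s t : Subgroup Δ} (h : s ≤ t) :
    s.topologicalClosure ≤ t.topologicalClosure :=
  Subgroup.topologicalClosure_minimal s (h.trans t.le_topologicalClosure)
    (Subgroup.isClosed_topologicalClosure t)

lemma cds_isClosed (H : Subgroup Δ) (m : ℕ) :
    IsClosed ((closedDerivedSeries Δ H (m + 1) : Subgroup Δ) : Set Δ) :=
  Subgroup.isClosed_topologicalClosure _

lemma cds_normal (H : Subgroup Δ) [hH : H.Normal] (m : ℕ) :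
    (closedDerivedSeries Δ H m).Normal := by
  induction m with
  | zero => exact hH
  | succ i ih =>
    haveI := ih
    haveI : (⁅closedDerivedSeries Δ H i, closedDerivedSeries Δ H i⁆ : Subgroup Δ).Normal :=
      Subgroup.commutator_normal _ _
    exact Subgroup.is_normal_topologicalClosure _

lemma commutator_self_le (K : Subgroup Δ) : ⁅K, K⁆ ≤ K := by
  rw [Subgroup.commutator_le]
  intro g hg h hh
  exact mul_mem (mul_mem (mul_mem hg hh) (inv_mem hg)) (inv_mem hh)

lemma cds_succ_le (H : Subgroup Δ) (hHcl : IsClosed (H : Set Δ)) (m : ℕ) :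
    closedDerivedSeries Δ H (m + 1) ≤ closedDerivedSeries Δ H m := by
  induction m with
  | zero => exact Subgroup.topologicalClosure_minimal _ (commutator_self_le H) hHcl
  | succ i ih =>
    exact Subgroup.topologicalClosure_minimal _
      ((Subgroup.commutator_mono ih ih).trans (Subgroup.le_topologicalClosure _))
      (Subgroup.isClosed_topologicalClosure _)

lemma cds_antitone (H : Subgroup Δ) (hHcl : IsClosed (H : Set Δ)) :
    Antitone (fun m => closedDerivedSeries Δ H m) :=
  antitone_nat_of_succ_le (cds_succ_le H hHcl)

end Aux

/-- Let `Δ` be a profinite group and `H` an open normal subgroup, and assume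
that every open subgroup `V` of `Δ` has torsion-free abelianization `V^{ab}` (expressed by:
`v ^ n ∈ closure ⁅V,V⁆` with `n > 0` implies `v ∈ closure ⁅V,V⁆`).  Let
`H^{[sol]} = ⋂_{m ≥ 1} H^{[m]}` be the intersection of the closed derived series of `H`.
Then the quotient `Δ / H^{[sol]}` is torsion-free (expressed by: `g ^ n ∈ H^{[sol]}` with
`n > 0` implies `g ∈ H^{[sol]}`). -/
theorem quotient_by_solvable_kernel_torsionFree
    (Δ : Type*) [Group Δ] [TopologicalSpace Δ] [IsTopologicalGroup Δ]
    [CompactSpace Δ] [T2Space Δ] [TotallyDisconnectedSpace Δ]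
    (H : Subgroup Δ) (hHopen : IsOpen (H : Set Δ)) (hHnormal : H.Normal)
    (habfree : ∀ V : Subgroup Δ, IsOpen (V : Set Δ) →
      ∀ v : V, ∀ n : ℕ, 0 < n →
        v ^ n ∈ (commutator V).topologicalClosure → v ∈ (commutator V).topologicalClosure) :
    ∀ g : Δ, ∀ n : ℕ, 0 < n →
      g ^ n ∈ (⨅ m : ℕ, closedDerivedSeries Δ H (m + 1)) →
      g ∈ (⨅ m : ℕ, closedDerivedSeries Δ H (m + 1)) := by
  intro g n hn hgn
  set D : ℕ → Subgroup Δ := fun m => closedDerivedSeries Δ H m with hD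
  set S : Subgroup Δ := ⨅ m : ℕ, D (m + 1) with hS
  by_contra hgS
  haveI hHn : H.Normal := hHnormal
  have hHcl : IsClosed (H : Set Δ) := Subgroup.isClosed_of_isOpen H hHopen
  have hDnormal : ∀ m, (D m).Normal := cds_normal H
  haveI hSnormal : S.Normal := by
    constructor
    intro x hx y
    rw [hS, Subgroup.mem_iInf] at hx ⊢
    exact fun m => (hDnormal (m + 1)).conj_mem x (hx m) y
  have hScoe : (S : Set Δ) = ⋂ m : ℕ, (D (m + 1) : Set Δ) := by
    rw [hS, Subgroup.coe_iInf]
  have hScl : IsClosed (S : Set Δ) := by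
    rw [hScoe]; exact isClosed_iInter fun m => cds_isClosed H m
  -- find an open normal subgroup N missing the compact set (S⁻¹ g)
  have hUopen : IsOpen (((fun s : Δ => s⁻¹ * g) '' (S : Set Δ))ᶜ) :=
    ((hScl.isCompact.image (by continuity)).isClosed).isOpen_compl
  have h1U : (1 : Δ) ∈ ((fun s : Δ => s⁻¹ * g) '' (S : Set Δ))ᶜ := by
    rintro ⟨s, hs, hseq⟩
    exact hgS ((inv_mul_eq_one.mp hseq) ▸ hs)
  obtain ⟨W, hWclopen, h1W, hWU⟩ := compact_exists_isClopen_in_isOpen hUopen h1U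
  obtain ⟨N, hNW⟩ :=
    IsTopologicalGroup.exist_openNormalSubgroup_sub_clopen_nhds_of_one hWclopen h1W
  set P : Subgroup Δ := S ⊔ (N : Subgroup Δ) with hP
  haveI : (N : Subgroup Δ).Normal := N.isNormal'
  haveI hPnormal : P.Normal := Subgroup.sup_normal S (N : Subgroup Δ)
  have hgP : g ∉ P := by
    intro hgPmem
    rw [hP, ← SetLike.mem_coe, Subgroup.mul_normal S (N : Subgroup Δ)] at hgPmem
    obtain ⟨s, hs, x, hx, hgsx⟩ := hgPmem
    have hmem : x ∈ (fun s : Δ => s⁻¹ * g) '' (S : Set Δ) :=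
      ⟨s, hs, by rw [← hgsx]; group⟩
    exact (hWU (hNW hx)) hmem
  have hNP : (N : Subgroup Δ) ≤ P := le_sup_right
  have hPopen : IsOpen (P : Set Δ) := Subgroup.isOpen_mono hNP N.isOpen
  set V : Subgroup Δ := P ⊔ Subgroup.zpowers g with hV
  have hVopen : IsOpen (V : Set Δ) := Subgroup.isOpen_mono le_sup_left hPopen
  have hgV : g ∈ V := Subgroup.mem_sup_right (Subgroup.mem_zpowers g)
  have hSV : S ≤ V := le_sup_left.trans' le_sup_left
  -- by compactness, some D (m+1) is contained in V
  have hex : ∃ m : ℕ, ((V : Set Δ)ᶜ) ∩ (D (m + 1) : Set Δ) = ∅ := by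
    refine IsCompact.elim_directed_family_closed (hVopen.isClosed_compl.isCompact)
      (fun m => (D (m + 1) : Set Δ)) (fun m => cds_isClosed H m) ?_ ?_
    · rw [← hScoe, Set.eq_empty_iff_forall_notMem]
      rintro x ⟨hxV, hxS⟩
      exact hxV (hSV hxS)
    · intro i j
      refine ⟨max i j, ?_, ?_⟩ <;>
        exact fun x hx =>
          (cds_antitone H hHcl (by omega : _ ≤ max i j + 1)) hx
  obtain ⟨m1, hm1⟩ := hex
  have hDV : (D (m1 + 1) : Subgroup Δ) ≤ V := by
    intro x hx
    by_contra hxV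
    exact (Set.eq_empty_iff_forall_notMem.mp hm1) x ⟨hxV, hx⟩
  -- hence S ⊆ closure [V, V]
  have hSVV : S ≤ (⁅V, V⁆ : Subgroup Δ).topologicalClosure := by
    have h1 : S ≤ D (m1 + 2) := iInf_le (fun m => D (m + 1)) (m1 + 1)
    have h2 : D (m1 + 2) = (⁅D (m1 + 1), D (m1 + 1)⁆ : Subgroup Δ).topologicalClosure := rfl
    exact h1.trans (h2 ▸ Subgroup.topologicalClosure_mono'
      (Subgroup.commutator_mono hDV hDV))
  -- [V, V] ≤ P since V/P is generated by the image of g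
  have hcommP : (⁅V, V⁆ : Subgroup Δ) ≤ P := by
    set π := QuotientGroup.mk' P with hπ
    have hmapV : Subgroup.map π V ≤ Subgroup.zpowers (π g) := by
      rw [Subgroup.map_le_iff_le_comap]
      show P ⊔ Subgroup.zpowers g ≤ _
      refine sup_le ?_ ?_
      · intro x hx
        have : π x = 1 := (QuotientGroup.eq_one_iff x).mpr hx
        simp only [Subgroup.mem_comap, this]
        exact one_mem _
      · rw [Subgroup.zpowers_eq_closure, Subgroup.closure_le]
        intro x hx
        rw [Set.mem_singleton_iff] at hx
        subst hx
        exact Subgroup.mem_zpowers _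
    have hmapcomm : Subgroup.map π (⁅V, V⁆ : Subgroup Δ) = ⊥ := by
      rw [Subgroup.map_commutator]
      refine le_bot_iff.mp ?_
      refine le_trans (Subgroup.commutator_mono hmapV hmapV) ?_
      rw [Subgroup.commutator_le]
      rintro a ⟨i, rfl⟩ b ⟨j, rfl⟩
      rw [Subgroup.mem_bot, commutatorElement_eq_one_iff_commute]
      exact (Commute.refl (π g)).zpow_zpow i j
    intro x hx
    have : π x ∈ Subgroup.map π (⁅V, V⁆ : Subgroup Δ) := ⟨x, hx, rfl⟩
    rw [hmapcomm, Subgroup.mem_bot] at this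
    exact (QuotientGroup.eq_one_iff x).mp this
  have hclosP : (⁅V, V⁆ : Subgroup Δ).topologicalClosure ≤ P :=
    Subgroup.topologicalClosure_minimal _ hcommP (Subgroup.isClosed_of_isOpen P hPopen)
  -- translate between the commutator of V as an abstract group and ⁅V,V⁆ in Δ
  have hval : Subgroup.map V.subtype (commutator ↥V) = (⁅V, V⁆ : Subgroup Δ) := by
    rw [commutator_def, Subgroup.map_commutator, ← MonoidHom.range_eq_map,
      Subgroup.range_subtype]
  have hmemiff : ∀ x : ↥V, (x ∈ (commutator ↥V).topologicalClosure ↔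
      (x : Δ) ∈ closure ((⁅V, V⁆ : Subgroup Δ) : Set Δ)) := by
    intro x
    have h1 : x ∈ (commutator ↥V).topologicalClosure ↔
        x ∈ closure ((commutator ↥V : Subgroup ↥V) : Set ↥V) := Iff.rfl
    rw [h1, Topology.IsEmbedding.subtypeVal.closure_eq_preimage_closure_image,
      Set.mem_preimage]
    have himg : (Subtype.val '' ((commutator ↥V : Subgroup ↥V) : Set ↥V)) =
        ((⁅V, V⁆ : Subgroup Δ) : Set Δ) := by
      rw [← hval, Subgroup.coe_map, Subgroup.coe_subtype]
    rw [himg]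
  -- apply the torsion-freeness hypothesis to V
  have hvn : (⟨g, hgV⟩ : ↥V) ^ n ∈ (commutator ↥V).topologicalClosure := by
    rw [hmemiff, SubmonoidClass.coe_pow]
    exact hSVV hgn
  have hfin := habfree V hVopen ⟨g, hgV⟩ n hn hvn
  rw [hmemiff] at hfin
  exact hgP (hclosP hfin)
end
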